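/- arXiv:1008.0376 — 5 statements merged into one kernel-verified Lean document; each statement's English description precedes it below -/
import Mathlib

section
/- For every integer n ≥ 0 and every x ∈ (0, 1], A_n(x) = ∑_{m=n+1}^∞ (1-x)^m / m, where A_n(x) = ∫_x^1 (1-y)^n / y dy. -/
/-! Since `(1 - y) ^ (n + 1) / y = (1 - y) ^ n / y - (1 - y) ^ n`, the integrals satisfy
`A_{n+1}(x) = A_n(x) - (1 - x) ^ (n + 1) / (n + 1)`, which is exactly how the tails of the
series `∑ (1 - x) ^ m / m` drop their first term. The induction starts from
`A_0(x) = -log x`, the Mercator series at `1 - x`. -/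

open intervalIntegral Real Set

lemma zero_notMem_uIcc_one {x : ℝ} (hx : 0 < x) : (0 : ℝ) ∉ uIcc x 1 := by
  rw [mem_uIcc]
  rintro (⟨h, -⟩ | ⟨h, -⟩) <;> linarith

lemma intervalIntegrable_one_sub_pow_div (n : ℕ) {x : ℝ} (hx : 0 < x) :
    IntervalIntegrable (fun y => (1 - y) ^ n / y) MeasureTheory.volume x 1 :=
  ContinuousOn.intervalIntegrable <| ContinuousOn.div (by fun_prop) (by fun_prop)
    fun _ hy h => zero_notMem_uIcc_one hx (h ▸ hy)

lemma integral_one_sub_pow_zero_div {x : ℝ} (hx : 0 < x) :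
    ∫ y in x..1, (1 - y) ^ 0 / y = -log x := by
  simp only [pow_zero, one_div]
  rw [integral_inv_of_pos hx one_pos, one_div, log_inv]

lemma integral_one_sub_pow_succ_div (n : ℕ) {x : ℝ} (hx : 0 < x) :
    ∫ y in x..1, (1 - y) ^ (n + 1) / y =
      (∫ y in x..1, (1 - y) ^ n / y) - (1 - x) ^ (n + 1) / (n + 1) := by
  have hsplit : ∫ y in x..1, (1 - y) ^ (n + 1) / y =
      ∫ y in x..1, ((1 - y) ^ n / y - (1 - y) ^ n) := by
    refine integral_congr fun y hy => ?_
    have hy0 : y ≠ 0 := fun h => zero_notMem_uIcc_one hx (h ▸ hy)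
    field_simp
    ring
  have hpow : ∫ y in x..1, (1 - y) ^ n = (1 - x) ^ (n + 1) / (n + 1) := by
    simp [integral_comp_sub_left (fun t => t ^ n) 1, integral_pow]
  rw [hsplit, integral_sub (intervalIntegrable_one_sub_pow_div n hx)
    ((by fun_prop : Continuous fun y : ℝ => (1 - y) ^ n).intervalIntegrable x 1), hpow]

lemma hasSum_integral_one_sub_pow_div (n : ℕ) {x : ℝ} (hx : x ∈ Ioo (0 : ℝ) 2) :
    HasSum (fun m : ℕ => (1 - x) ^ (n + 1 + m) / (n + 1 + m))
      (∫ y in x..1, (1 - y) ^ n / y) := by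
  induction n with
  | zero =>
    have hmercator := hasSum_pow_div_log_of_abs_lt_one (x := 1 - x)
      (abs_sub_lt_iff.mpr ⟨by linarith [hx.1], by linarith [hx.2]⟩)
    rw [sub_sub_cancel] at hmercator
    rw [integral_one_sub_pow_zero_div hx.1]
    convert hmercator using 2 with m
    push_cast
    ring
  | succ n ih =>
    rw [integral_one_sub_pow_succ_div n hx.1]
    have hshift := (hasSum_nat_add_iff' 1).mpr ih
    simp only [Finset.sum_range_one, add_zero, Nat.cast_zero] at hshift
    convert hshift using 2 with m
    · rfl
    · rw [show n + 1 + 1 + m = n + 1 + (m + 1) by ring]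
      push_cast
      ring

theorem stmt4 (n : ℕ) (x : ℝ) (hx : x ∈ Set.Ioc (0:ℝ) 1) :
    (∫ y in x..1, (1 - y) ^ n / y) =
      ∑' m : ℕ, (1 - x) ^ (n + 1 + m) / (n + 1 + m) :=
  (hasSum_integral_one_sub_pow_div n ⟨hx.1, by linarith [hx.2]⟩).tsum_eq.symm
end

section
/- For every real α > 0 and every integer n ≥ 1, the function q(x) = α x^{α-1} / B(α, n) satisfies ∫_0^1 A_{n-1}(x) q(tx) dx = t^{α-1} for all t > 0, where A_{n-1}(x) = ∫_x^1 (1-y)^{n-1}/y dy. -/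
/-!
Since `(t x)^(α-1) = t^(α-1) x^(α-1)`, the claim reduces to
`∫₀¹ α x^(α-1) A(x) dx = ∫₀¹ x^(α-1) (1-x)^(n-1) dx = B(α, n)`. This is an integration by parts:
`x^α A(x)` has derivative `α x^(α-1) A(x) - x^(α-1) (1-x)^(n-1)` and vanishes at both ends,
at `0` because `0 ≤ A(x) ≤ -log x`; the same bound makes `x^(α-1) A(x)` integrable.
-/

open MeasureTheory intervalIntegral Real Set Filter Topology

/-- The paper's `A_{n-1}` is `tailIntegral (n - 1)`. -/
noncomputable def tailIntegral (m : ℕ) (x : ℝ) : ℝ := ∫ y in x..1, (1 - y) ^ m / y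

lemma neg_log_le_rpow_neg_div {x ε : ℝ} (hx : 0 < x) (hε : 0 < ε) : -log x ≤ x ^ (-ε) / ε := by
  simpa [log_inv, inv_rpow hx.le, ← rpow_neg hx.le] using log_le_rpow_div (inv_nonneg.2 hx.le) hε

lemma intervalIntegrable_rpow_mul_one_sub_pow {r : ℝ} (hr : -1 < r) (m : ℕ) :
    IntervalIntegrable (fun x => x ^ r * (1 - x) ^ m) volume 0 1 :=
  (intervalIntegrable_rpow' hr).mul_continuousOn (by fun_prop)

lemma integral_rpow_mul_one_sub_pow_pos {r : ℝ} (hr : -1 < r) (m : ℕ) :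
    0 < ∫ x in 0..1, x ^ r * (1 - x) ^ m :=
  intervalIntegral_pos_of_pos_on (intervalIntegrable_rpow_mul_one_sub_pow hr m)
    (fun x hx => mul_pos (rpow_pos_of_pos hx.1 _) (pow_pos (by linarith [hx.2]) m)) one_pos

namespace tailIntegral

variable (m : ℕ) {x : ℝ}

lemma continuousAt_integrand (hx : x ≠ 0) : ContinuousAt (fun y : ℝ => (1 - y) ^ m / y) x :=
  (continuousAt_const.sub continuousAt_id |>.pow m).div continuousAt_id hx

lemma intervalIntegrable_integrand (hx : 0 < x) :
    IntervalIntegrable (fun y : ℝ => (1 - y) ^ m / y) volume x 1 := by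
  refine ContinuousOn.intervalIntegrable fun y hy => ?_
  have hy : 0 < y := lt_of_lt_of_le (lt_min hx one_pos) hy.1
  exact (continuousAt_integrand m hy.ne').continuousWithinAt

lemma hasDerivAt (hx : 0 < x) : HasDerivAt (tailIntegral m) (-((1 - x) ^ m / x)) x :=
  integral_hasDerivAt_left (intervalIntegrable_integrand m hx)
    (by fun_prop : Measurable fun y : ℝ => (1 - y) ^ m / y).stronglyMeasurable.stronglyMeasurableAtFilter
    (continuousAt_integrand m hx.ne')

lemma nonneg (hx : x ∈ Ioc 0 1) : 0 ≤ tailIntegral m x :=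
  integral_nonneg hx.2 fun y hy =>
    div_nonneg (pow_nonneg (by linarith [hy.2]) m) (hx.1.trans_le hy.1).le

lemma le_neg_log (hx : x ∈ Ioc 0 1) : tailIntegral m x ≤ -log x := by
  have h0 : (0 : ℝ) ∉ uIcc x 1 := by
    rw [uIcc_of_le hx.2]; exact fun h => (not_le.2 hx.1) h.1
  rw [show -log x = ∫ y in x..1, 1 / y by rw [integral_one_div h0, one_div, log_inv]]
  refine integral_mono_on hx.2 (intervalIntegrable_integrand m hx.1)
    (intervalIntegrable_one_div (fun y hy => ne_of_mem_of_not_mem hy h0) continuousOn_id)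
    fun y hy => ?_
  have hy0 : 0 < y := hx.1.trans_le hy.1
  gcongr
  exact pow_le_one₀ (by linarith [hy.2]) (by linarith [hy.1])

variable {m} {α : ℝ}

lemma rpow_mul_le (hα : 0 < α) (hx : x ∈ Ioc 0 1) :
    x ^ (α - 1) * tailIntegral m x ≤ 2 / α * x ^ (α / 2 - 1) := calc
  x ^ (α - 1) * tailIntegral m x ≤ x ^ (α - 1) * (x ^ (-(α / 2)) / (α / 2)) := by
    refine mul_le_mul_of_nonneg_left ?_ (rpow_nonneg hx.1.le _)
    exact (le_neg_log m hx).trans (neg_log_le_rpow_neg_div hx.1 (half_pos hα))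
  _ = 2 / α * x ^ (α / 2 - 1) := by
    rw [show α / 2 - 1 = (α - 1) + -(α / 2) by ring, rpow_add hx.1]
    field_simp

lemma intervalIntegrable_rpow_mul (hα : 0 < α) :
    IntervalIntegrable (fun x => x ^ (α - 1) * tailIntegral m x) volume 0 1 := by
  rw [intervalIntegrable_iff_integrableOn_Ioc_of_le zero_le_one]
  refine Integrable.mono' ((intervalIntegrable_rpow' (r := α / 2 - 1) (by linarith)).const_mul
    (2 / α)).1 ?_ (ae_restrict_of_forall_mem measurableSet_Ioc fun x hx => ?_)
  · refine ContinuousOn.aestronglyMeasurable (fun x hx => ?_) measurableSet_Ioc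
    exact ((continuousAt_rpow_const x _ (Or.inl hx.1.ne')).mul
      (hasDerivAt m hx.1).continuousAt).continuousWithinAt
  · rw [norm_of_nonneg (mul_nonneg (rpow_nonneg hx.1.le _) (nonneg m hx))]
    exact rpow_mul_le hα hx

lemma tendsto_rpow_mul_nhdsGT_zero (hα : 0 < α) :
    Tendsto (fun x => x ^ α * tailIntegral m x) (𝓝[>] 0) (𝓝 0) := by
  have hlog : Tendsto (fun x => -(log x * x ^ α)) (𝓝[>] 0) (𝓝 0) := by
    simpa using (tendsto_log_mul_rpow_nhdsGT_zero hα).neg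
  have hIoc : ∀ᶠ x in 𝓝[>] (0 : ℝ), x ∈ Ioc 0 1 :=
    mem_of_superset (Ioo_mem_nhdsGT one_pos) Ioo_subset_Ioc_self
  refine squeeze_zero' ?_ ?_ hlog
  · filter_upwards [hIoc] with x hx using mul_nonneg (rpow_nonneg hx.1.le α) (nonneg m hx)
  · filter_upwards [hIoc] with x hx
    nlinarith [mul_le_mul_of_nonneg_left (le_neg_log m hx) (rpow_nonneg hx.1.le α)]

theorem integral_rpow_mul (hα : 0 < α) :
    ∫ x in 0..1, α * x ^ (α - 1) * tailIntegral m x =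
      ∫ x in 0..1, x ^ (α - 1) * (1 - x) ^ m := by
  have hderiv : ∀ x ∈ Ioo (0 : ℝ) 1, HasDerivAt (fun x => x ^ α * tailIntegral m x)
      (α * x ^ (α - 1) * tailIntegral m x - x ^ (α - 1) * (1 - x) ^ m) x := by
    intro x hx
    refine ((hasDerivAt_rpow_const (Or.inl hx.1.ne')).mul (hasDerivAt m hx.1)).congr_deriv ?_
    rw [rpow_sub_one hx.1.ne']
    field_simp
    ring
  have hint₁ : IntervalIntegrable (fun x => α * x ^ (α - 1) * tailIntegral m x) volume 0 1 := by
    simpa only [mul_assoc] using (intervalIntegrable_rpow_mul hα).const_mul α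
  have hint₂ := intervalIntegrable_rpow_mul_one_sub_pow (show -1 < α - 1 by linarith) m
  have hone : Tendsto (fun x => x ^ α * tailIntegral m x) (𝓝[<] 1) (𝓝 0) := by
    have hcont : ContinuousAt (fun x => x ^ α * tailIntegral m x) 1 :=
      (continuousAt_rpow_const 1 α (Or.inl one_ne_zero)).mul (hasDerivAt m one_pos).continuousAt
    have hval : (1 : ℝ) ^ α * tailIntegral m 1 = 0 := by simp [tailIntegral]
    exact hval ▸ hcont.tendsto.mono_left nhdsWithin_le_nhds
  have hftc := integral_eq_sub_of_hasDerivAt_of_tendsto one_pos hderiv (hint₁.sub hint₂)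
    (tendsto_rpow_mul_nhdsGT_zero hα) hone
  rwa [integral_sub hint₁ hint₂, sub_self, sub_eq_zero] at hftc

end tailIntegral

theorem stmt13 (α : ℝ) (hα : 0 < α) (n : ℕ) (hn : 1 ≤ n)
    (q : ℝ → ℝ)
    (hq : ∀ x, q x = α * x ^ (α - 1) /
      ∫ u in (0:ℝ)..1, u ^ (α - 1) * (1 - u) ^ ((n : ℝ) - 1))
    (t : ℝ) (ht : 0 < t) :
    (∫ x in (0:ℝ)..1, (∫ y in x..1, (1 - y) ^ (n - 1) / y) * q (t * x)) =
      t ^ (α - 1) := by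
  set B := ∫ u in (0:ℝ)..1, u ^ (α - 1) * (1 - u) ^ ((n : ℝ) - 1)
  have hB : B = ∫ x in (0:ℝ)..1, x ^ (α - 1) * (1 - x) ^ (n - 1) := by
    simp only [B, ← Nat.cast_pred hn, rpow_natCast]
  have hBpos : 0 < B := hB ▸ integral_rpow_mul_one_sub_pow_pos (by linarith) (n - 1)
  calc (∫ x in (0:ℝ)..1, (∫ y in x..1, (1 - y) ^ (n - 1) / y) * q (t * x))
      = ∫ x in (0:ℝ)..1, t ^ (α - 1) / B * (α * x ^ (α - 1) * tailIntegral (n - 1) x) := by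
        refine integral_congr fun x hx => ?_
        rw [uIcc_of_le zero_le_one] at hx
        simp only [hq, mul_rpow ht.le hx.1, tailIntegral]
        ring
    _ = t ^ (α - 1) := by
      rw [intervalIntegral.integral_const_mul, tailIntegral.integral_rpow_mul hα, ← hB, div_mul_cancel₀ _ hBpos.ne']
end

section
/- For every real α > 0 and integer n ≥ 1, the function q(t) = α t^{α-1}/B(α,n) satisfies ∫_0^∞ q(t) ln(1 + t^{-2α}) dt = π α ∏_{k=1}^{n-1} (1 + α/k). -/
/-!
Substituting `y = t ^ α` turns the integral into `B(α, n)⁻¹ ∫₀^∞ log (1 + y⁻²) dy`. On `(0, ∞)`,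
`y log (1 + y⁻²) + 2 arctan y` is an antiderivative of the integrand that vanishes at `0⁺` and
tends to `π` at infinity, so the remaining integral is `π`. Finally
`B(α, n) = (n - 1)! / (α (α + 1) ⋯ (α + n - 1))`, and `α ∏_{k=1}^{n-1} (1 + α / k)` is exactly the
reciprocal of this.
-/

open Real MeasureTheory Set Filter Topology Finset Nat

lemma Real.log_one_add_inv_sq {y : ℝ} (hy : y ≠ 0) :
    log (1 + (y ^ 2)⁻¹) = log (1 + y ^ 2) - 2 * log y := by
  rw [show 1 + (y ^ 2)⁻¹ = (1 + y ^ 2) / y ^ 2 by field_simp; ring,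
    Real.log_div (by positivity) (by positivity), Real.log_pow]
  push_cast
  ring

lemma Real.mul_log_one_add_inv_sq (y : ℝ) :
    y * log (1 + (y ^ 2)⁻¹) = y * log (1 + y ^ 2) - 2 * (y * log y) := by
  rcases eq_or_ne y 0 with rfl | hy
  · simp
  · rw [Real.log_one_add_inv_sq hy]
    ring

lemma Real.hasDerivAt_mul_log_one_add_sq {y : ℝ} (hy : y ≠ 0) :
    HasDerivAt (fun y ↦ y * log (1 + y ^ 2) - 2 * (y * log y) + 2 * arctan y)
      (log (1 + (y ^ 2)⁻¹)) y := by
  have hsq : HasDerivAt (fun y : ℝ ↦ 1 + y ^ 2) (2 * y) y := by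
    simpa using (hasDerivAt_pow 2 y).const_add 1
  have h := (((hasDerivAt_id y).mul (hsq.log (by positivity))).sub
    ((Real.hasDerivAt_mul_log hy).const_mul 2)).add ((Real.hasDerivAt_arctan y).const_mul 2)
  refine h.congr_deriv ?_
  rw [Real.log_one_add_inv_sq hy, id]
  field_simp
  ring

lemma Real.tendsto_mul_log_one_add_inv_sq_atTop :
    Tendsto (fun y : ℝ ↦ y * log (1 + (y ^ 2)⁻¹)) atTop (𝓝 0) := by
  refine squeeze_zero' ?_ ?_ tendsto_inv_atTop_zero
  · filter_upwards [eventually_ge_atTop 0] with y hy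
    exact mul_nonneg hy (Real.log_nonneg (by simp; positivity))
  · filter_upwards [eventually_gt_atTop 0] with y hy
    calc y * log (1 + (y ^ 2)⁻¹) ≤ y * (y ^ 2)⁻¹ := by
          gcongr
          linarith [Real.log_le_sub_one_of_pos (show 0 < 1 + (y ^ 2)⁻¹ by positivity)]
      _ = y⁻¹ := by field_simp

theorem Real.integral_Ioi_log_one_add_inv_sq :
    ∫ y in Ioi (0 : ℝ), log (1 + (y ^ 2)⁻¹) = π := by
  -- In this form the antiderivative is visibly continuous at `0`.
  have hcont : Continuous fun y : ℝ ↦ y * log (1 + y ^ 2) - 2 * (y * log y) + 2 * arctan y :=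
    ((continuous_id.mul ((continuous_const.add (continuous_pow 2)).log
      fun y ↦ by dsimp; positivity)).sub (continuous_const.mul Real.continuous_mul_log)).add
      (continuous_const.mul continuous_arctan)
  have hlim : Tendsto (fun y : ℝ ↦ y * log (1 + y ^ 2) - 2 * (y * log y) + 2 * arctan y)
      atTop (𝓝 π) := by
    have h := Real.tendsto_mul_log_one_add_inv_sq_atTop.add
      ((tendsto_nhds_of_tendsto_nhdsWithin Real.tendsto_arctan_atTop).const_mul 2)
    simp_rw [Real.mul_log_one_add_inv_sq] at h
    convert h using 2
    ring
  rw [integral_Ioi_of_hasDerivAt_of_nonneg hcont.continuousWithinAt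
    (fun y hy ↦ Real.hasDerivAt_mul_log_one_add_sq (ne_of_gt hy))
    (fun y _ ↦ Real.log_nonneg (by simp; positivity)) hlim]
  simp

theorem Real.integral_Ioi_mul_rpow_mul_log_one_add_rpow_neg {α : ℝ} (hα : 0 < α) :
    ∫ t in Ioi (0 : ℝ), α * t ^ (α - 1) * log (1 + t ^ (-(2 * α))) = π := by
  rw [← Real.integral_Ioi_log_one_add_inv_sq,
    ← integral_comp_rpow_Ioi_of_pos (g := fun y ↦ log (1 + (y ^ 2)⁻¹)) hα]
  refine setIntegral_congr_fun measurableSet_Ioi fun t ht ↦ ?_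
  rw [smul_eq_mul, Real.rpow_neg (le_of_lt ht), ← Real.rpow_natCast, ← Real.rpow_mul (le_of_lt ht)]
  norm_num [mul_comm]

lemma intervalIntegral_rpow_mul_one_sub_rpow (a b : ℝ) :
    ((∫ u in (0 : ℝ)..1, u ^ (a - 1) * (1 - u) ^ (b - 1) : ℝ) : ℂ) =
      Complex.betaIntegral a b := by
  rw [Complex.betaIntegral, ← intervalIntegral.integral_ofReal]
  refine intervalIntegral.integral_congr fun u hu ↦ ?_
  rw [Set.uIcc_of_le zero_le_one] at hu
  simp only [Complex.ofReal_mul]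
  rw [Complex.ofReal_cpow hu.1, Complex.ofReal_cpow (by linarith [hu.2])]
  push_cast
  rfl

lemma intervalIntegral_rpow_mul_one_sub_pow {α : ℝ} (hα : 0 < α) (m : ℕ) :
    ∫ u in (0 : ℝ)..1, u ^ (α - 1) * (1 - u) ^ (((m + 1 : ℕ) : ℝ) - 1) =
      m ! / ∏ j ∈ range (m + 1), (α + j) := by
  apply Complex.ofReal_injective
  rw [intervalIntegral_rpow_mul_one_sub_rpow, Nat.cast_succ, Complex.ofReal_add,
    Complex.ofReal_natCast, Complex.ofReal_one,
    Complex.betaIntegral_eval_nat_add_one_right (by simpa using hα)]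
  push_cast
  rfl

lemma mul_prod_Icc_one_add_div (α : ℝ) (m : ℕ) :
    α * ∏ k ∈ Icc 1 m, (1 + α / k) = (∏ j ∈ range (m + 1), (α + j)) / m ! := by
  induction m with
  | zero => simp
  | succ m ih =>
    rw [prod_Icc_succ_top (by omega), ← mul_assoc, ih, prod_range_succ _ (m + 1),
      Nat.factorial_succ]
    push_cast
    field_simp
    ring

theorem stmt14 (α : ℝ) (hα : 0 < α) (n : ℕ) (hn : 1 ≤ n)
    (q : ℝ → ℝ)
    (hq : ∀ t, q t = α * t ^ (α - 1) /
      ∫ u in (0:ℝ)..1, u ^ (α - 1) * (1 - u) ^ ((n : ℝ) - 1)) :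
    (∫ t in Set.Ioi (0:ℝ), q t * Real.log (1 + t ^ (-(2 * α)))) =
      π * α * ∏ k ∈ Finset.Icc 1 (n - 1), (1 + α / k) := by
  obtain ⟨m, rfl⟩ : ∃ m, n = m + 1 := ⟨n - 1, by omega⟩
  simp only [hq, intervalIntegral_rpow_mul_one_sub_pow hα, Nat.add_sub_cancel, mul_assoc,
    mul_prod_Icc_one_add_div]
  calc ∫ t in Ioi 0, α * t ^ (α - 1) / (m ! / ∏ j ∈ range (m + 1), (α + j)) *
        log (1 + t ^ (-(2 * α)))
      = ∫ t in Ioi 0, (∏ j ∈ range (m + 1), (α + j)) / m ! *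
          (α * t ^ (α - 1) * log (1 + t ^ (-(2 * α)))) := by
        congr 1 with t
        rw [div_div_eq_mul_div]
        ring
    _ = π * ((∏ j ∈ range (m + 1), (α + j)) / m !) := by
        rw [integral_const_mul, Real.integral_Ioi_mul_rpow_mul_log_one_add_rpow_neg hα, mul_comm]
end

section
/- Let n ≥ 0 be an integer, ε > 0, and let φ be a C^{n+2} function on (0,∞) with φ^{(s)}(t) = O(t^{-s-ε}) as t → ∞ for s = 0,...,n+2 (where φ^{(0)} = φ). Define Φ_n(t) = -d/dt[ ((-t)^{n+1}/n!) φ^{(n+1)}(t) ]. Then for every y > 0, ∫_y^∞ Φ_n(t) A_n(y/t) dt = φ(y), where A_n(x) = ∫_x^1 (1-u)^n/u du. -/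
/-!
With `g t = (-t) ^ (n + 1) / n! * φ⁽ⁿ⁺¹⁾ t` we have `Φ_n = -g'`, and
`F t = g t * A_n (y / t) + ∑_{k ≤ n} (y - t) ^ k / k! * φ⁽ᵏ⁾ t` satisfies
`F' t = -Φ_n t * A_n (y / t)`: the term `g t * d/dt A_n (y / t) = g t * (1 - y / t) ^ n / t`
is exactly minus the derivative `(y - t) ^ n / n! * φ⁽ⁿ⁺¹⁾ t` of the Taylor sum.
Since `A_n 1 = 0`, `F y = φ y`. Since `0 ≤ A_n (y / t) ≤ log (t / y) = O(t ^ δ)` for every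
`δ > 0`, the decay hypotheses give `F t → 0` and integrability of `Φ_n t * A_n (y / t)`,
so the integral equals `F y - lim F = φ y`.
-/

open Real MeasureTheory Filter Asymptotics
open Set Topology

theorem isBigO_sub_pow_atTop (c : ℝ) (k : ℕ) :
    (fun t : ℝ => (c - t) ^ k) =O[atTop] fun t => t ^ (k : ℝ) := by
  have h : (fun t : ℝ => c - t) =O[atTop] fun t => t :=
    (isLittleO_const_id_atTop c).isBigO.sub (isBigO_refl _ _)
  simpa only [rpow_natCast] using h.pow k

theorem Asymptotics.IsBigO.mul_rpow_atTop {f g : ℝ → ℝ} {a b c : ℝ}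
    (hf : f =O[atTop] fun t => t ^ a) (hg : g =O[atTop] fun t => t ^ b) (habc : a + b = c) :
    (fun t => f t * g t) =O[atTop] fun t => t ^ c := by
  refine (hf.mul hg).congr' .rfl ?_
  filter_upwards [eventually_gt_atTop 0] with t ht
  rw [← rpow_add ht, habc]

noncomputable def kernelA (n : ℕ) (x : ℝ) : ℝ := ∫ u in x..1, (1 - u) ^ n / u

section kernelA

variable {n : ℕ} {x : ℝ}

theorem continuousOn_kernelA_integrand (n : ℕ) :
    ContinuousOn (fun u : ℝ => (1 - u) ^ n / u) (Ioi 0) :=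
  (continuousOn_const.sub continuousOn_id).pow n |>.div continuousOn_id fun _ hu => hu.ne'

theorem hasDerivAt_kernelA (hx : 0 < x) : HasDerivAt (kernelA n) (-((1 - x) ^ n / x)) x := by
  have hc := continuousOn_kernelA_integrand n
  have hInt : IntervalIntegrable (fun u : ℝ => (1 - u) ^ n / u) volume x 1 :=
    (hc.mono fun u hu => lt_of_lt_of_le (lt_min hx one_pos) hu.1).intervalIntegrable
  exact intervalIntegral.integral_hasDerivAt_left hInt
    (hc.stronglyMeasurableAtFilter isOpen_Ioi _ hx) (hc.continuousAt (Ioi_mem_nhds hx))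

theorem kernelA_one : kernelA n 1 = 0 := intervalIntegral.integral_same

theorem kernelA_nonneg (hx0 : 0 < x) (hx1 : x ≤ 1) : 0 ≤ kernelA n x :=
  intervalIntegral.integral_nonneg hx1 fun u hu =>
    div_nonneg (pow_nonneg (by linarith [hu.2]) n) (hx0.trans_le hu.1).le

theorem kernelA_le_neg_log (hx0 : 0 < x) (hx1 : x ≤ 1) : kernelA n x ≤ -log x := by
  have hsub : uIcc x 1 ⊆ Ioi 0 := fun u hu => by
    rw [uIcc_of_le hx1] at hu; exact hx0.trans_le hu.1
  have hmono : kernelA n x ≤ ∫ u in x..1, u⁻¹ := by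
    refine intervalIntegral.integral_mono_on hx1
      ((continuousOn_kernelA_integrand n).mono hsub).intervalIntegrable
      (continuousOn_inv₀.mono fun u hu => (hsub hu).ne').intervalIntegrable fun u hu => ?_
    have hu0 : 0 < u := hx0.trans_le hu.1
    rw [← one_div]
    gcongr
    exact pow_le_one₀ (by linarith [hu.2]) (by linarith)
  rwa [integral_inv_of_pos hx0 one_pos, log_div one_ne_zero hx0.ne', log_one, zero_sub] at hmono

theorem hasDerivAt_kernelA_div {y t : ℝ} (hy : 0 < y) (ht : 0 < t) :
    HasDerivAt (fun s => kernelA n (y / s)) ((1 - y / t) ^ n / t) t := by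
  have hinner : HasDerivAt (fun s => y / s) (-y / t ^ 2) t := by
    simpa [div_eq_mul_inv, neg_div] using (hasDerivAt_inv ht.ne').const_mul y
  refine ((hasDerivAt_kernelA (n := n) (div_pos hy ht)).comp t hinner).congr_deriv ?_
  field_simp

theorem isBigO_kernelA_div_atTop {y δ : ℝ} (hy : 0 < y) (hδ : 0 < δ) :
    (fun t => kernelA n (y / t)) =O[atTop] fun t => t ^ δ := by
  refine IsBigO.of_bound (y ^ δ * δ)⁻¹ ?_
  filter_upwards [eventually_ge_atTop y] with t hyt
  have ht : 0 < t := hy.trans_le hyt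
  have hx0 : 0 < y / t := div_pos hy ht
  have hx1 : y / t ≤ 1 := (div_le_one ht).mpr hyt
  rw [norm_of_nonneg (kernelA_nonneg hx0 hx1), norm_of_nonneg (rpow_nonneg ht.le δ)]
  calc kernelA n (y / t) ≤ log (t / y) := by
        simpa [log_div ht.ne' hy.ne', log_div hy.ne' ht.ne'] using
          kernelA_le_neg_log (n := n) hx0 hx1
    _ ≤ (t / y) ^ δ / δ := log_le_rpow_div (div_pos ht hy).le hδ
    _ = (y ^ δ * δ)⁻¹ * t ^ δ := by
        rw [div_rpow ht.le hy.le]; field_simp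

end kernelA

-- For `ψ k = f⁽ᵏ⁾` this is the Taylor polynomial of `f` of order `m` at `t`, evaluated at `y`.
noncomputable def taylorSum (ψ : ℕ → ℝ → ℝ) (m : ℕ) (t y : ℝ) : ℝ :=
  ∑ k ∈ Finset.range (m + 1), (y - t) ^ k / k.factorial * ψ k t

section taylorSum

variable {ψ : ℕ → ℝ → ℝ} {y : ℝ}

theorem taylorSum_self (m : ℕ) : taylorSum ψ m y y = ψ 0 y := by
  rw [taylorSum, Finset.sum_eq_single 0]
  · simp
  · intro k _ hk
    simp [zero_pow hk]
  · simp

theorem hasDerivAt_taylorSum {t : ℝ} :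
    ∀ m : ℕ, (∀ k ≤ m, HasDerivAt (ψ k) (ψ (k + 1) t) t) →
      HasDerivAt (fun s => taylorSum ψ m s y) ((y - t) ^ m / m.factorial * ψ (m + 1) t) t
  | 0, hψ => by simpa [taylorSum] using hψ 0 le_rfl
  | m + 1, hψ => by
    have hprev := hasDerivAt_taylorSum m fun k hk => hψ k (hk.trans m.le_succ)
    have hpow : HasDerivAt (fun s => (y - s) ^ (m + 1) / (m + 1).factorial)
        (-((m + 1 : ℕ) * (y - t) ^ m / (m + 1).factorial)) t := by
      simpa [neg_div] using
        (((hasDerivAt_id t).const_sub y).pow (m + 1)).div_const ((m + 1).factorial : ℝ)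
    have hlast := hpow.mul (hψ (m + 1) le_rfl)
    simp only [taylorSum, Finset.sum_range_succ _ (m + 1)] at hprev ⊢
    refine (hprev.add hlast).congr_deriv ?_
    rw [Nat.factorial_succ]
    push_cast
    field_simp
    ring

theorem tendsto_taylorSum_atTop {m : ℕ} {ε : ℝ} (hε : 0 < ε)
    (hdecay : ∀ k ≤ m, ψ k =O[atTop] fun t => t ^ (-(k : ℝ) - ε)) :
    Tendsto (fun t => taylorSum ψ m t y) atTop (𝓝 0) := by
  have hterm : ∀ k ≤ m, Tendsto (fun t => (y - t) ^ k / k.factorial * ψ k t) atTop (𝓝 0) := by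
    intro k hk
    have hO := ((isBigO_sub_pow_atTop y k).const_mul_left ((k.factorial : ℝ)⁻¹)).mul_rpow_atTop
      (hdecay k hk) (c := -ε) (by ring)
    simpa [div_eq_inv_mul, mul_assoc] using hO.trans_tendsto (tendsto_rpow_neg_atTop hε)
  simpa [taylorSum] using tendsto_finsetSum (Finset.range (m + 1)) fun k hk =>
    hterm k (Nat.lt_succ_iff.mp (Finset.mem_range.mp hk))

end taylorSum

-- `Phi n ψ t = -d/dt [(-t) ^ (n + 1) / n! * ψ (n + 1) t]` when `ψ (n + 1)' = ψ (n + 2)`.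
noncomputable def Phi (n : ℕ) (ψ : ℕ → ℝ → ℝ) (t : ℝ) : ℝ :=
  (-t) ^ n / n.factorial * ((n + 1) * ψ (n + 1) t + t * ψ (n + 2) t)

section Phi

variable {n : ℕ} {ψ : ℕ → ℝ → ℝ} {ε : ℝ}

theorem hasDerivAt_neg_pow_mul {t : ℝ} (h : HasDerivAt (ψ (n + 1)) (ψ (n + 2) t) t) :
    HasDerivAt (fun u => (-u) ^ (n + 1) / n.factorial * ψ (n + 1) u) (-Phi n ψ t) t := by
  have hpow : HasDerivAt (fun u : ℝ => (-u) ^ (n + 1) / n.factorial)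
      (-((n + 1 : ℕ) * (-t) ^ n / n.factorial)) t := by
    simpa [neg_div] using ((hasDerivAt_id t).neg.pow (n + 1)).div_const (n.factorial : ℝ)
  refine (hpow.mul h).congr_deriv ?_
  simp only [Phi, pow_succ]
  push_cast
  ring

theorem isBigO_neg_pow_div_atTop (k : ℕ) (c : ℝ) :
    (fun t : ℝ => (-t) ^ k / c) =O[atTop] fun t => t ^ (k : ℝ) := by
  simpa [div_eq_inv_mul] using (isBigO_sub_pow_atTop 0 k).const_mul_left c⁻¹

theorem isBigO_Phi_atTop
    (h₁ : ψ (n + 1) =O[atTop] fun t => t ^ (-((n + 1 : ℕ) : ℝ) - ε))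
    (h₂ : ψ (n + 2) =O[atTop] fun t => t ^ (-((n + 2 : ℕ) : ℝ) - ε)) :
    Phi n ψ =O[atTop] fun t => t ^ (-1 - ε) := by
  have hid : (fun t : ℝ => t) =O[atTop] fun t => t ^ (1 : ℝ) := by
    simpa using isBigO_refl (fun t : ℝ => t) atTop
  have hsum : (fun t => (n + 1) * ψ (n + 1) t + t * ψ (n + 2) t) =O[atTop]
      fun t => t ^ (-((n + 1 : ℕ) : ℝ) - ε) :=
    (h₁.const_mul_left _).add (hid.mul_rpow_atTop h₂ (by push_cast; ring))
  exact (isBigO_neg_pow_div_atTop n _).mul_rpow_atTop hsum (by push_cast; ring)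

end Phi

theorem integrableOn_Phi_mul_kernelA_div {n : ℕ} {ε : ℝ} (hε : 0 < ε) {ψ : ℕ → ℝ → ℝ}
    (hcont₁ : ContinuousOn (ψ (n + 1)) (Ioi 0)) (hcont₂ : ContinuousOn (ψ (n + 2)) (Ioi 0))
    (h₁ : ψ (n + 1) =O[atTop] fun t => t ^ (-((n + 1 : ℕ) : ℝ) - ε))
    (h₂ : ψ (n + 2) =O[atTop] fun t => t ^ (-((n + 2 : ℕ) : ℝ) - ε))
    {y : ℝ} (hy : 0 < y) :
    IntegrableOn (fun t => Phi n ψ t * kernelA n (y / t)) (Ioi y) := by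
  have hcont : ContinuousOn (fun t => Phi n ψ t * kernelA n (y / t)) (Ici y) := by
    intro t ht
    have ht0 : 0 < t := hy.trans_le ht
    have hψ₁ : ContinuousAt (ψ (n + 1)) t := hcont₁.continuousAt (Ioi_mem_nhds ht0)
    have hψ₂ : ContinuousAt (ψ (n + 2)) t := hcont₂.continuousAt (Ioi_mem_nhds ht0)
    have hA : ContinuousAt (fun s => kernelA n (y / s)) t :=
      (hasDerivAt_kernelA_div hy ht0).continuousAt
    unfold Phi
    fun_prop
  have hO : (fun t => Phi n ψ t * kernelA n (y / t)) =O[atTop] fun t => t ^ (-1 - ε / 2) :=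
    (isBigO_Phi_atTop h₁ h₂).mul_rpow_atTop (isBigO_kernelA_div_atTop hy (half_pos hε)) (by ring)
  exact ((hcont.locallyIntegrableOn measurableSet_Ici).integrableOn_of_isBigO_atTop hO
    (integrableAtFilter_rpow_atTop_iff.mpr (by linarith))).mono_set Ioi_subset_Ici_self

theorem integral_Ioi_Phi_mul_kernelA_div {n : ℕ} {ε : ℝ} (hε : 0 < ε) {ψ : ℕ → ℝ → ℝ}
    (hderiv : ∀ k ≤ n + 1, ∀ t, 0 < t → HasDerivAt (ψ k) (ψ (k + 1) t) t)
    (hcont : ContinuousOn (ψ (n + 2)) (Ioi 0))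
    (hdecay : ∀ k ≤ n + 2, ψ k =O[atTop] fun t => t ^ (-(k : ℝ) - ε))
    {y : ℝ} (hy : 0 < y) :
    ∫ t in Ioi y, Phi n ψ t * kernelA n (y / t) = ψ 0 y := by
  set g : ℝ → ℝ := fun u => (-u) ^ (n + 1) / n.factorial * ψ (n + 1) u
  set F : ℝ → ℝ := fun t => g t * kernelA n (y / t) + taylorSum ψ n t y
  have hF : ∀ t ∈ Ici y, HasDerivAt (fun t => -F t) (Phi n ψ t * kernelA n (y / t)) t := by
    intro t ht
    have ht0 : 0 < t := hy.trans_le ht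
    have hcancel : g t * ((1 - y / t) ^ n / t) + (y - t) ^ n / n.factorial * ψ (n + 1) t = 0 := by
      have hlin : -t * (1 - y / t) = y - t := by field_simp; ring
      have hpow : (-t) ^ (n + 1) * ((1 - y / t) ^ n / t) = -(y - t) ^ n := by
        rw [← hlin, mul_pow, pow_succ]
        field_simp
      simp only [g]
      linear_combination ψ (n + 1) t / n.factorial * hpow
    have h := (((hasDerivAt_neg_pow_mul (hderiv (n + 1) le_rfl t ht0)).mul
      (hasDerivAt_kernelA_div (n := n) hy ht0)).add
        (hasDerivAt_taylorSum (y := y) n fun k hk => hderiv k (hk.trans n.le_succ) t ht0)).neg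
    refine h.congr_deriv ?_
    linear_combination -hcancel
  have hFy : F y = ψ 0 y := by
    simp [F, div_self hy.ne', kernelA_one, taylorSum_self]
  have hgO : g =O[atTop] fun t => t ^ (-ε) :=
    (isBigO_neg_pow_div_atTop (n + 1) _).mul_rpow_atTop (hdecay (n + 1) (by omega))
      (c := -ε) (by push_cast; ring)
  have hFlim : Tendsto F atTop (𝓝 0) := by
    have hgA := (hgO.mul_rpow_atTop (isBigO_kernelA_div_atTop (n := n) hy (half_pos hε))
      (c := -(ε / 2)) (by ring)).trans_tendsto (tendsto_rpow_neg_atTop (half_pos hε))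
    simpa using hgA.add (tendsto_taylorSum_atTop hε fun k hk => hdecay k (by omega))
  have hint := integrableOn_Phi_mul_kernelA_div hε
    (fun t ht => (hderiv (n + 1) le_rfl t ht).continuousAt.continuousWithinAt) hcont
    (hdecay (n + 1) (by omega)) (hdecay (n + 2) le_rfl) hy
  rw [integral_Ioi_of_hasDerivAt_of_tendsto' hF hint hFlim.neg, hFy]
  ring

section IteratedDeriv

variable {𝕜 F : Type*} [NontriviallyNormedField 𝕜] [NormedAddCommGroup F] [NormedSpace 𝕜 F]
  {f : 𝕜 → F} {s : Set 𝕜} {N : WithTop ℕ∞} {k : ℕ}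

theorem ContDiffOn.continuousOn_iteratedDeriv_of_isOpen (hf : ContDiffOn 𝕜 N f s)
    (hs : IsOpen s) (hk : k ≤ N) : ContinuousOn (iteratedDeriv k f) s :=
  (hf.continuousOn_iteratedDerivWithin hk hs.uniqueDiffOn).congr
    fun _ hx => (iteratedDerivWithin_of_isOpen hs hx).symm

theorem ContDiffOn.hasDerivAt_iteratedDeriv_of_isOpen (hf : ContDiffOn 𝕜 N f s)
    (hs : IsOpen s) (hk : k < N) {x : 𝕜} (hx : x ∈ s) :
    HasDerivAt (iteratedDeriv k f) (iteratedDeriv (k + 1) f x) x := by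
  have hdiff : DifferentiableAt 𝕜 (iteratedDeriv k f) x :=
    ((hf.differentiableOn_iteratedDerivWithin hk hs.uniqueDiffOn x hx).differentiableAt
      (hs.mem_nhds hx)).congr_of_eventuallyEq
      (Filter.eventuallyEq_of_mem (hs.mem_nhds hx) (iteratedDerivWithin_of_isOpen hs)).symm
  simpa only [iteratedDeriv_succ] using hdiff.hasDerivAt

end IteratedDeriv

theorem stmt15 (n : ℕ) (ε : ℝ) (hε : 0 < ε) (φ : ℝ → ℝ)
    (hsmooth : ContDiffOn ℝ (n + 2) φ (Set.Ioi 0))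
    (hdecay : ∀ s : ℕ, s ≤ n + 2 →
      (fun t : ℝ => iteratedDeriv s φ t) =O[atTop]
        fun t : ℝ => t ^ (-(s : ℝ) - ε))
    (Φ : ℝ → ℝ)
    (hΦ : ∀ t, Φ t =
      -deriv (fun u : ℝ => (-u) ^ (n + 1) / (Nat.factorial n) *
        iteratedDeriv (n + 1) φ u) t)
    (y : ℝ) (hy : 0 < y) :
    (∫ t in Set.Ioi y, Φ t * ∫ u in (y / t)..1, (1 - u) ^ n / u) = φ y := by
  have hderiv : ∀ k ≤ n + 1, ∀ t, 0 < t →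
      HasDerivAt (iteratedDeriv k φ) (iteratedDeriv (k + 1) φ t) t := fun k hk _ ht =>
    hsmooth.hasDerivAt_iteratedDeriv_of_isOpen isOpen_Ioi
      (by exact_mod_cast Nat.lt_succ_of_le hk) ht
  have hΦ_eq : EqOn Φ (Phi n (iteratedDeriv · φ)) (Ioi y) := fun t ht => by
    rw [hΦ, neg_eq_iff_eq_neg]
    exact (hasDerivAt_neg_pow_mul (ψ := (iteratedDeriv · φ))
      (hderiv (n + 1) le_rfl t (hy.trans ht))).deriv
  rw [setIntegral_congr_fun measurableSet_Ioi fun t ht => congrArg (· * _) (hΦ_eq ht)]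
  exact integral_Ioi_Phi_mul_kernelA_div hε hderiv
    (hsmooth.continuousOn_iteratedDeriv_of_isOpen isOpen_Ioi le_rfl) hdecay hy
end

section
/- For α > 0 let φ(t) = ln(1 + t^{-2α}) and Φ_1(α,t) = -(t² φ''(t))'. Then Φ_1(α,t) = (4α²/t) · [(2α+1) t^{4α} + (1-2α) t^{2α}] / (1 + t^{2α})³; moreover Φ_1(α,t) ≥ 0 for all t > 0 if and only if 0 < α ≤ 1/2. -/
/-!
Put `s = t ^ (2α)`, so that `t * ds/dt = 2α s`. Differentiating three times gives
`Φ₁ t = (2α)² / t * s ((2α + 1) s + 1 - 2α) / (1 + s)³`. As `t` runs over `(0, ∞)` so does `s`,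
and `(2α + 1) s + 1 - 2α` stays nonnegative for all `s > 0` exactly when `1 - 2α ≥ 0`.
-/

open Real Set

lemma hasDerivAt_rpow_const_of_pos (p : ℝ) {t : ℝ} (ht : 0 < t) :
    HasDerivAt (fun u : ℝ => u ^ p) (p * t ^ p / t) t := by
  simpa only [rpow_sub_one ht.ne', ← mul_div_assoc]
    using hasDerivAt_rpow_const (p := p) (Or.inl ht.ne')

lemma hasDerivAt_log_one_add_rpow_neg (p : ℝ) {t : ℝ} (ht : 0 < t) :
    HasDerivAt (fun u : ℝ => log (1 + u ^ (-p))) (-p / (t * (1 + t ^ p))) t := by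
  have hs := rpow_pos_of_pos ht p
  refine (((hasDerivAt_rpow_const_of_pos (-p) ht).const_add 1).log (by positivity)).congr_deriv ?_
  rw [rpow_neg ht.le]
  field_simp
  ring

lemma hasDerivAt_neg_div_mul_one_add_rpow (p : ℝ) {t : ℝ} (ht : 0 < t) :
    HasDerivAt (fun u : ℝ => -p / (u * (1 + u ^ p)))
      (p * (1 + (p + 1) * t ^ p) / (t ^ 2 * (1 + t ^ p) ^ 2)) t := by
  have hs := rpow_pos_of_pos ht p
  refine ((hasDerivAt_const t (-p)).fun_div
    ((hasDerivAt_id' t).fun_mul ((hasDerivAt_rpow_const_of_pos p ht).const_add 1))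
    (by positivity)).congr_deriv ?_
  field_simp
  ring

lemma hasDerivAt_mul_one_add_rpow_div_sq (p : ℝ) {t : ℝ} (ht : 0 < t) :
    HasDerivAt (fun u : ℝ => p * (1 + (p + 1) * u ^ p) / (1 + u ^ p) ^ 2)
      (-(p ^ 2 / t * (((p + 1) * (t ^ p) ^ 2 + (1 - p) * t ^ p) / (1 + t ^ p) ^ 3))) t := by
  have hs := rpow_pos_of_pos ht p
  have hd := hasDerivAt_rpow_const_of_pos p ht
  refine ((((hd.const_mul (p + 1)).const_add 1).const_mul p).fun_div
    ((hd.const_add 1).fun_pow 2) (by positivity)).congr_deriv ?_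
  field_simp
  ring

theorem neg_deriv_sq_mul_deriv_deriv_log_one_add_rpow_neg (p : ℝ) {t : ℝ} (ht : 0 < t) :
    -deriv (fun u => u ^ 2 * deriv (deriv fun u => log (1 + u ^ (-p))) u) t =
      p ^ 2 / t * (((p + 1) * (t ^ p) ^ 2 + (1 - p) * t ^ p) / (1 + t ^ p) ^ 3) := by
  have h₁ : EqOn (deriv fun u => log (1 + u ^ (-p))) (fun u => -p / (u * (1 + u ^ p))) (Ioi 0) :=
    fun u hu => (hasDerivAt_log_one_add_rpow_neg p hu).deriv
  have h₂ : EqOn (fun u => u ^ 2 * deriv (deriv fun u => log (1 + u ^ (-p))) u)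
      (fun u => p * (1 + (p + 1) * u ^ p) / (1 + u ^ p) ^ 2) (Ioi 0) := by
    intro u (hu : 0 < u)
    have hs := rpow_pos_of_pos hu p
    dsimp only
    rw [(h₁.eventuallyEq_of_mem (Ioi_mem_nhds hu)).deriv_eq,
      (hasDerivAt_neg_div_mul_one_add_rpow p hu).deriv]
    field_simp
  rw [(h₂.eventuallyEq_of_mem (Ioi_mem_nhds ht)).deriv_eq,
    (hasDerivAt_mul_one_add_rpow_div_sq p ht).deriv, neg_neg]

lemma forall_pos_nonneg_quadratic_iff {p : ℝ} (hp : -1 ≤ p) :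
    (∀ s : ℝ, 0 < s → 0 ≤ (p + 1) * s ^ 2 + (1 - p) * s) ↔ p ≤ 1 := by
  refine ⟨fun h => ?_, fun hp1 s hs => ?_⟩
  · by_contra! hp1
    -- at `s = (p - 1) / (2 (p + 1))` the quadratic equals `-(p - 1) s / 2`
    have hs : 0 < (p - 1) / (2 * (p + 1)) := by apply div_pos <;> linarith
    have := h _ hs
    field_simp at this
    nlinarith
  · exact add_nonneg (mul_nonneg (by linarith) (sq_nonneg s)) (mul_nonneg (by linarith) hs.le)

lemma forall_pos_rpow_iff {p : ℝ} (hp : p ≠ 0) (P : ℝ → Prop) :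
    (∀ t : ℝ, 0 < t → P (t ^ p)) ↔ ∀ s : ℝ, 0 < s → P s := by
  refine ⟨fun h s hs => ?_, fun h t ht => h _ (rpow_pos_of_pos ht p)⟩
  simpa [rpow_inv_rpow hs.le hp] using h (s ^ p⁻¹) (rpow_pos_of_pos hs _)

theorem stmt18 (α : ℝ) (hα : 0 < α) (φ : ℝ → ℝ)
    (hφ : ∀ t, φ t = Real.log (1 + t ^ (-(2 * α))))
    (Φ₁ : ℝ → ℝ)
    (hΦ₁ : ∀ t, Φ₁ t = -deriv (fun u : ℝ => u ^ 2 * deriv (deriv φ) u) t) :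
    (∀ t : ℝ, 0 < t →
      Φ₁ t = 4 * α ^ 2 / t *
        (((2 * α + 1) * t ^ (4 * α) + (1 - 2 * α) * t ^ (2 * α)) /
          (1 + t ^ (2 * α)) ^ 3)) ∧
    ((∀ t : ℝ, 0 < t → 0 ≤ Φ₁ t) ↔ α ≤ 1 / 2) := by
  obtain rfl : φ = _ := funext hφ
  refine ⟨fun t ht => ?_, ?_⟩
  · rw [hΦ₁, neg_deriv_sq_mul_deriv_deriv_log_one_add_rpow_neg (2 * α) ht,
      show 4 * α = 2 * α * (2 : ℕ) by push_cast; ring, rpow_mul_natCast ht.le]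
    ring
  calc (∀ t : ℝ, 0 < t → 0 ≤ Φ₁ t)
      ↔ ∀ t : ℝ, 0 < t → 0 ≤ (2 * α + 1) * (t ^ (2 * α)) ^ 2 + (1 - 2 * α) * t ^ (2 * α) :=
        forall₂_congr fun t ht => by
          rw [hΦ₁, neg_deriv_sq_mul_deriv_deriv_log_one_add_rpow_neg (2 * α) ht,
            mul_nonneg_iff_of_pos_left (by positivity), le_div_iff₀ (by positivity), zero_mul]
    _ ↔ 2 * α ≤ 1 := by
        rw [forall_pos_rpow_iff (by positivity) fun s => 0 ≤ (2 * α + 1) * s ^ 2 + (1 - 2 * α) * s,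
          forall_pos_nonneg_quadratic_iff (by linarith)]
    _ ↔ α ≤ 1 / 2 := by constructor <;> intro h <;> linarith
end
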